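/- There is a unique action of G on the space E^∞ of infinite paths such that the length-n truncation of g·ξ equals g applied to the length-n truncation of ξ, for all n ≥ 0. -/

import Mathlib

noncomputable section

open scoped Classical

/-! ### Corona groups -/

section CoronaSec

variable (G : Type*) [Group G]

def eventuallyTrivial : Subgroup (ℕ → G) where
  carrier := {f | ∃ N, ∀ n, N ≤ n → f n = 1}
  one_mem' := ⟨0, fun n _ => rfl⟩
  mul_mem' := by
    rintro a b ⟨N, hN⟩ ⟨M, hM⟩
    exact ⟨max N M, fun n hn => by
      simp [Pi.mul_apply, hN n (le_trans (le_max_left _ _) hn),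
        hM n (le_trans (le_max_right _ _) hn)]⟩
  inv_mem' := by
    rintro a ⟨N, hN⟩
    exact ⟨N, fun n hn => by simp [Pi.inv_apply, hN n hn]⟩

instance eventuallyTrivial_normal : (eventuallyTrivial G).Normal := by
  constructor
  rintro a ⟨N, hN⟩ g
  exact ⟨N, fun n hn => by simp [Pi.mul_apply, Pi.inv_apply, hN n hn]⟩

def lshift : (ℕ → G) →* (ℕ → G) where
  toFun f := fun n => f (n + 1)
  map_one' := rfl
  map_mul' a b := rfl

def rshift : (ℕ → G) →* (ℕ → G) where
  toFun f := fun n => if n = 0 then 1 else f (n - 1)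
  map_one' := by funext n; by_cases h : n = 0 <;> simp [h]
  map_mul' a b := by funext n; by_cases h : n = 0 <;> simp [h]

lemma lshift_comap : eventuallyTrivial G ≤ (eventuallyTrivial G).comap (lshift G) := by
  rintro f ⟨N, hN⟩
  exact ⟨N, fun n hn => hN (n + 1) (by omega)⟩

lemma rshift_comap : eventuallyTrivial G ≤ (eventuallyTrivial G).comap (rshift G) := by
  rintro f ⟨N, hN⟩
  refine ⟨N + 1, fun n hn => ?_⟩
  show (if n = 0 then 1 else f (n - 1)) = 1
  rw [if_neg (by omega)]
  exact hN (n - 1) (by omega)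

abbrev Corona : Type _ := (ℕ → G) ⧸ eventuallyTrivial G

def coronaRho : Corona G →* Corona G :=
  QuotientGroup.map _ _ (rshift G) (rshift_comap G)

def coronaLam : Corona G →* Corona G :=
  QuotientGroup.map _ _ (lshift G) (lshift_comap G)

def coronaRhoZ : ℤ → Corona G → Corona G
  | Int.ofNat n => (⇑(coronaRho G))^[n]
  | Int.negSucc n => (⇑(coronaLam G))^[n + 1]

end CoronaSec

/-! ### Graphs, paths and self-similar actions -/

structure SSGraph (V : Type*) (E : Type*) where
  r : E → V
  d : E → V

namespace SSGraph

variable {V E : Type*}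

abbrev Pth (V E : Type*) := V × List E

def IsPath (Γ : SSGraph V E) (p : Pth V E) : Prop :=
  (∀ e ∈ p.2.head?, Γ.r e = p.1) ∧ p.2.Chain' fun a b => Γ.d a = Γ.r b

def src (Γ : SSGraph V E) (p : Pth V E) : V :=
  match p.2.getLast? with
  | none => p.1
  | some e => Γ.d e

def comp (p q : Pth V E) : Pth V E := (p.1, p.2 ++ q.2)

def ofVertex (v : V) : Pth V E := (v, [])

def ofEdge (Γ : SSGraph V E) (e : E) : Pth V E := (Γ.r e, [e])

structure GraphAction (G : Type*) [Group G] (Γ : SSGraph V E) where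
  actV : G → V → V
  actE : G → E → E
  actV_one : ∀ v, actV 1 v = v
  actV_mul : ∀ g h v, actV (g * h) v = actV g (actV h v)
  actE_one : ∀ e, actE 1 e = e
  actE_mul : ∀ g h e, actE (g * h) e = actE g (actE h e)
  r_act : ∀ g e, Γ.r (actE g e) = actV g (Γ.r e)
  d_act : ∀ g e, Γ.d (actE g e) = actV g (Γ.d e)

structure EdgeCocycle {G : Type*} [Group G] {Γ : SSGraph V E} (GA : GraphAction G Γ) where
  φ : G → E → G
  cocycle : ∀ g h e, φ (g * h) e = φ g (GA.actE h e) * φ h e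
  vertex_compat : ∀ g e v, GA.actV (φ g e) v = GA.actV g v

/-- The extension of a self-similar `(G,E,φ)`-datum to the set of all finite paths,
with all the properties listed in the extension proposition. -/
structure PathSystem {G : Type*} [Group G] {Γ : SSGraph V E} {GA : GraphAction G Γ}
    (c : EdgeCocycle GA) where
  act : G → Pth V E → Pth V E
  coc : G → Pth V E → G
  act_vertex : ∀ g v, act g (ofVertex v) = ofVertex (GA.actV g v)
  act_edge : ∀ g e, act g (Γ.ofEdge e) = Γ.ofEdge (GA.actE g e)
  coc_vertex : ∀ g v, coc g (ofVertex v) = g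
  coc_edge : ∀ g e, coc g (Γ.ofEdge e) = c.φ g e
  isPath_act : ∀ g p, Γ.IsPath p → Γ.IsPath (act g p)
  length_act : ∀ g p, Γ.IsPath p → (act g p).2.length = p.2.length
  ran_act : ∀ g p, Γ.IsPath p → (act g p).1 = GA.actV g p.1
  src_act : ∀ g p, Γ.IsPath p → Γ.src (act g p) = GA.actV g (Γ.src p)
  coc_vertex_act : ∀ g p v, Γ.IsPath p → GA.actV (coc g p) v = GA.actV g v
  act_one : ∀ p, Γ.IsPath p → act 1 p = p
  act_mul : ∀ g h p, Γ.IsPath p → act (g * h) p = act g (act h p)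
  coc_mul : ∀ g h p, Γ.IsPath p → coc (g * h) p = coc g (act h p) * coc h p
  act_comp : ∀ g p q, Γ.IsPath p → Γ.IsPath q → Γ.src p = q.1 →
    act g (comp p q) = comp (act g p) (act (coc g p) q)
  coc_comp : ∀ g p q, Γ.IsPath p → Γ.IsPath q → Γ.src p = q.1 →
    coc g (comp p q) = coc (coc g p) q

def PseudoFree {G : Type*} [Group G] {Γ : SSGraph V E} (GA : GraphAction G Γ)
    (c : EdgeCocycle GA) : Prop :=
  ∀ g e, GA.actE g e = e → c.φ g e = 1 → g = 1

/-! ### The inverse semigroup `S_{G,E}` -/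

def SgeCond {G : Type*} [Group G] (Γ : SSGraph V E) (GA : GraphAction G Γ)
    (t : Pth V E × G × Pth V E) : Prop :=
  Γ.IsPath t.1 ∧ Γ.IsPath t.2.2 ∧ Γ.src t.1 = GA.actV t.2.1 (Γ.src t.2.2)

def sgeSet {G : Type*} [Group G] (Γ : SSGraph V E) (GA : GraphAction G Γ) :
    Set (Option (Pth V E × G × Pth V E)) :=
  {x | x = none ∨ ∃ t, x = some t ∧ SgeCond Γ GA t}

def sgeMulAux {G : Type*} [Group G] {Γ : SSGraph V E} {GA : GraphAction G Γ}
    {c : EdgeCocycle GA} (S : PathSystem c) :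
    Pth V E × G × Pth V E → Pth V E × G × Pth V E → Option (Pth V E × G × Pth V E) :=
  fun x y =>
    if x.2.2.1 = y.1.1 ∧ x.2.2.2 <+: y.1.2 then
      let ε : Pth V E := (Γ.src x.2.2, y.1.2.drop x.2.2.2.length)
      some (comp x.1 (S.act x.2.1 ε), S.coc x.2.1 ε * y.2.1, y.2.2)
    else if y.1.1 = x.2.2.1 ∧ y.1.2 <+: x.2.2.2 then
      let ε : Pth V E := (Γ.src y.1, x.2.2.2.drop y.1.2.length)
      some (x.1, x.2.1 * (S.coc y.2.1⁻¹ ε)⁻¹, comp y.2.2 (S.act y.2.1⁻¹ ε))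
    else none

def sgeMul {G : Type*} [Group G] {Γ : SSGraph V E} {GA : GraphAction G Γ}
    {c : EdgeCocycle GA} (S : PathSystem c) :
    Option (Pth V E × G × Pth V E) → Option (Pth V E × G × Pth V E) →
      Option (Pth V E × G × Pth V E)
  | some x, some y => sgeMulAux S x y
  | _, _ => none

def sgeStar {G : Type*} [Group G] :
    Option (Pth V E × G × Pth V E) → Option (Pth V E × G × Pth V E)
  | none => none
  | some t => some (t.2.2, t.2.1⁻¹, t.1)

/-! ### Infinite paths -/

def InfPath (Γ : SSGraph V E) (ξ : ℕ → E) : Prop :=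
  ∀ n, Γ.d (ξ n) = Γ.r (ξ (n + 1))

/-- Truncation of an infinite path: the finite path formed by its first `n` edges.
(Index `n` of the sequence is the `(n+1)`-st edge of the path.) -/
def trunc (Γ : SSGraph V E) (ξ : ℕ → E) (n : ℕ) : Pth V E :=
  (Γ.r (ξ 0), (List.range n).map ξ)

/-- Concatenation `αξ` of a finite path with an infinite path. -/
def compInf (α : Pth V E) (ξ : ℕ → E) : ℕ → E :=
  fun n => α.2.getD n (ξ (n - α.2.length))

/-- `Phi S g ξ n = φ(g, ξ|_n)`, i.e. the entry of the sequence `Φ(g,ξ) ∈ G^∞` at the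
`(n+1)`-st position in the 1-based indexing of the paper. -/
def Phi {G : Type*} [Group G] {Γ : SSGraph V E} {GA : GraphAction G Γ}
    {c : EdgeCocycle GA} (S : PathSystem c) (g : G) (ξ : ℕ → E) : ℕ → G :=
  fun n => S.coc g (Γ.trunc ξ n)

/-- The extension of the self-similar action to infinite paths. -/
structure InfAction {G : Type*} [Group G] {Γ : SSGraph V E} {GA : GraphAction G Γ}
    {c : EdgeCocycle GA} (S : PathSystem c) where
  a : G → (ℕ → E) → (ℕ → E)
  isInf : ∀ g ξ, Γ.InfPath ξ → Γ.InfPath (a g ξ)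
  a_one : ∀ ξ, Γ.InfPath ξ → a 1 ξ = ξ
  a_mul : ∀ g h ξ, Γ.InfPath ξ → a (g * h) ξ = a g (a h ξ)
  trunc_a : ∀ g ξ n, Γ.InfPath ξ → Γ.trunc (a g ξ) n = S.act g (Γ.trunc ξ n)

/-- `η` belongs to the cylinder `Z(β)`. -/
def InCyl (Γ : SSGraph V E) (β : Pth V E) (η : ℕ → E) : Prop :=
  Γ.r (η 0) = β.1 ∧ ∀ n (hn : n < β.2.length), η n = β.2[n]'hn

/-- Equality of germs `[α₁,g₁,β₁; η₁] = [α₂,g₂,β₂; η₂]` for the action of `S_{G,E}`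
on the infinite path space. -/
def germEqv {G : Type*} [Group G] {Γ : SSGraph V E} {GA : GraphAction G Γ}
    {c : EdgeCocycle GA} (S : PathSystem c)
    (α₁ : Pth V E) (g₁ : G) (β₁ : Pth V E) (η₁ : ℕ → E)
    (α₂ : Pth V E) (g₂ : G) (β₂ : Pth V E) (η₂ : ℕ → E) : Prop :=
  η₁ = η₂ ∧ ∃ δ : Pth V E, Γ.IsPath δ ∧ Γ.InCyl δ η₁ ∧
    sgeMul S (some (α₁, g₁, β₁)) (some (δ, 1, δ)) =
      sgeMul S (some (α₂, g₂, β₂)) (some (δ, 1, δ))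

/-- The partial isometry `s_α` associated to a finite path. -/
def sPath {A : Type*} [Monoid A] (pv : V → A) (se : E → A) : Pth V E → A :=
  fun x =>
    match x with
    | (v, []) => pv v
    | (_, es) => (es.map se).prod

end SSGraph

end

/-! Since the extended action respects concatenation, `g·(ξ|ₙ₊₁) = (g·ξ|ₙ)(φ(g, ξ|ₙ)·ξₙ₊₁)`,
so the truncation condition forces the edges of `g·ξ` one at a time. Defining `g·ξ` by that
formula, induction on `n` gives the truncation condition, and the action laws pass from finite
to infinite paths because an infinite path is determined by its truncations. -/

namespace SSGraph

variable {V E G : Type*} [Group G] {Γ : SSGraph V E} {GA : GraphAction G Γ}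
  {c : EdgeCocycle GA}

lemma trunc_zero (ξ : ℕ → E) : Γ.trunc ξ 0 = ofVertex (Γ.r (ξ 0)) := rfl

lemma trunc_succ (ξ : ℕ → E) (n : ℕ) :
    Γ.trunc ξ (n + 1) = comp (Γ.trunc ξ n) (Γ.ofEdge (ξ n)) := by
  simp [trunc, comp, ofEdge, List.range_succ]

lemma src_comp_ofEdge (p : Pth V E) (e : E) : Γ.src (comp p (Γ.ofEdge e)) = Γ.d e := by
  simp [src, comp, ofEdge]

lemma isPath_ofEdge (e : E) : Γ.IsPath (Γ.ofEdge e) :=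
  ⟨by simp [ofEdge], List.isChain_singleton e⟩

lemma eq_of_forall_trunc_eq (Γ : SSGraph V E) {ζ ξ : ℕ → E}
    (h : ∀ n, Γ.trunc ζ n = Γ.trunc ξ n) : ζ = ξ := by
  funext n
  simpa [trunc] using congrArg (fun p : Pth V E => p.2[n]?) (h (n + 1))

namespace InfPath

variable {ξ : ℕ → E}

lemma isPath_trunc (hξ : Γ.InfPath ξ) (n : ℕ) : Γ.IsPath (Γ.trunc ξ n) := by
  refine ⟨fun e he => ?_, ?_⟩
  · cases n with
    | zero => simp [trunc] at he
    | succ n => simp [trunc, List.range_succ_eq_map] at he; simp [trunc, ← he]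
  · show List.IsChain _ ((List.range n).map ξ)
    rw [List.isChain_map]
    cases n with
    | zero => simp
    | succ n => exact (List.isChain_range_succ _ n).mpr fun m _ => hξ m

lemma src_trunc (hξ : Γ.InfPath ξ) (n : ℕ) : Γ.src (Γ.trunc ξ n) = Γ.r (ξ n) := by
  cases n with
  | zero => rfl
  | succ n => rw [trunc_succ, src_comp_ofEdge, hξ n]

end InfPath

/-- `(g·ξ)ₙ₊₁ = φ(g, ξ|ₙ)·ξₙ₊₁`, with the edges of `ξ` indexed from `0`. -/
def infAct (S : PathSystem c) (g : G) (ξ : ℕ → E) : ℕ → E :=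
  fun n => GA.actE (Phi S g ξ n) (ξ n)

variable (S : PathSystem c) (g : G) {ξ : ℕ → E}

lemma act_trunc_succ (hξ : Γ.InfPath ξ) (n : ℕ) :
    S.act g (Γ.trunc ξ (n + 1)) =
      comp (S.act g (Γ.trunc ξ n)) (Γ.ofEdge (infAct S g ξ n)) := by
  rw [trunc_succ, S.act_comp _ _ _ (hξ.isPath_trunc n) (isPath_ofEdge _) (hξ.src_trunc n),
    S.act_edge]
  rfl

lemma trunc_infAct (hξ : Γ.InfPath ξ) (n : ℕ) :
    Γ.trunc (infAct S g ξ) n = S.act g (Γ.trunc ξ n) := by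
  induction n with
  | zero =>
    have hr : Γ.r (infAct S g ξ 0) = GA.actV g (Γ.r (ξ 0)) := by
      rw [infAct, GA.r_act, Phi, trunc_zero, S.coc_vertex]
    rw [trunc_zero, trunc_zero, S.act_vertex, hr]
  | succ n ih => rw [trunc_succ, ih, act_trunc_succ S g hξ]

lemma InfPath.infAct (hξ : Γ.InfPath ξ) : Γ.InfPath (infAct S g ξ) := by
  intro n
  simp only [SSGraph.infAct, Phi, GA.d_act, GA.r_act, hξ n,
    S.coc_vertex_act _ _ _ (hξ.isPath_trunc _)]

end SSGraph

open SSGraph in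
theorem infinite_path_action_exists_unique_general {V E G : Type*} [Group G]
    (Γ : SSGraph V E)
    (GA : SSGraph.GraphAction G Γ) (c : SSGraph.EdgeCocycle GA)
    (S : PathSystem c) :
    ∃ a : G → (ℕ → E) → (ℕ → E),
      (∀ g ξ, Γ.InfPath ξ → Γ.InfPath (a g ξ)) ∧
      (∀ ξ, Γ.InfPath ξ → a 1 ξ = ξ) ∧
      (∀ g h ξ, Γ.InfPath ξ → a (g * h) ξ = a g (a h ξ)) ∧
      (∀ g ξ n, Γ.InfPath ξ → Γ.trunc (a g ξ) n = S.act g (Γ.trunc ξ n)) ∧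
      ∀ a' : G → (ℕ → E) → (ℕ → E),
        (∀ g ξ n, Γ.InfPath ξ → Γ.trunc (a' g ξ) n = S.act g (Γ.trunc ξ n)) →
        ∀ g ξ, Γ.InfPath ξ → a' g ξ = a g ξ := by
  refine ⟨infAct S, fun g ξ hξ => hξ.infAct S g, fun ξ hξ => ?_, fun g h ξ hξ => ?_,
    fun g ξ n hξ => trunc_infAct S g hξ n, fun a' ha' g ξ hξ => ?_⟩ <;>
    refine Γ.eq_of_forall_trunc_eq fun n => ?_
  · rw [trunc_infAct S 1 hξ, S.act_one _ (hξ.isPath_trunc n)]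
  · rw [trunc_infAct S _ hξ, trunc_infAct S g (hξ.infAct S h), trunc_infAct S h hξ,
      S.act_mul g h _ (hξ.isPath_trunc n)]
  · rw [ha' g ξ n hξ, trunc_infAct S g hξ]

open SSGraph in
theorem infinite_path_action_exists_unique {V E G : Type*} [Group G] [Countable G] [Fintype V] [Fintype E]
    (Γ : SSGraph V E) (hns : ∀ v : V, ∃ e, Γ.r e = v)
    (GA : SSGraph.GraphAction G Γ) (c : SSGraph.EdgeCocycle GA)
    (S : PathSystem c) :
    ∃ a : G → (ℕ → E) → (ℕ → E),
      (∀ g ξ, Γ.InfPath ξ → Γ.InfPath (a g ξ)) ∧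
      (∀ ξ, Γ.InfPath ξ → a 1 ξ = ξ) ∧
      (∀ g h ξ, Γ.InfPath ξ → a (g * h) ξ = a g (a h ξ)) ∧
      (∀ g ξ n, Γ.InfPath ξ → Γ.trunc (a g ξ) n = S.act g (Γ.trunc ξ n)) ∧
      ∀ a' : G → (ℕ → E) → (ℕ → E),
        (∀ g ξ n, Γ.InfPath ξ → Γ.trunc (a' g ξ) n = S.act g (Γ.trunc ξ n)) →
        ∀ g ξ, Γ.InfPath ξ → a' g ξ = a g ξ :=
  infinite_path_action_exists_unique_general Γ GA c S
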